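/- Fix n ∈ ℕ and q,a,c ∈ ℂ with q ≠ 0, q^j ≠ 1, a·q^j ≠ 1 and c·q^j ≠ 1 for 1 ≤ j ≤ n. Define the big q-Laguerre polynomial P_n(x) := Σ_{k=0}^{n} [(q^{−n};q)_k·(x;q)_k / ((q;q)_k·(a q;q)_k·(c q;q)_k)]·q^k. Then P_n is an eigenfunction, with eigenvalue q^{−n}, of the operator K₀ of the basic representation of the confluent Zhedanov algebra Z_IV (written here in the rescaled variable, i.e. the paper's identity K₀P_n[λx] = q^{−n}P_n[λx]): for every x ∈ ℂ∖{0}, [q·(c x + a·(x − c·(1+q−x)))/x²]·P_n(x) + [(x−q a)(x−q c)/x²]·P_n(x/q) − [q·(x−1)·a c/x²]·P_n(q x) = q^{−n}·P_n(x). -/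

import Mathlib

/-!
On the basis `φₖ(x) = (x; q)ₖ` the operator `K₀` is lower bidiagonal,
`K₀ φₖ = q⁻ᵏ φₖ - μₖ φₖ₋₁` with `μₖ = q⁻ᵏ (1 - qᵏ)(1 - a qᵏ)(1 - c qᵏ)`; the factor `x - 1` in
front of `P (q x)` is what makes this work, since `(1 - x) (q x; q)ₖ = (x; q)ₖ₊₁`.
Writing `Pₙ = ∑ wₖ φₖ`, the ratio of consecutive Pochhammer quotients gives
`wₖ₊₁ μₖ₊₁ = wₖ (q⁻ᵏ - q⁻ⁿ)`, so the lowering part of term `k + 1` turns the eigenvalue `q⁻ᵏ`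
of term `k` into `q⁻ⁿ`.
-/

open Finset

/-- The q-Pochhammer symbol `(z; q)_k`. -/
noncomputable def qPoch (z q : ℂ) (k : ℕ) : ℂ := ∏ j ∈ Finset.range k, (1 - z * q ^ j)

lemma sum_mul_eq_of_lowering {R : Type*} [CommRing R] (n : ℕ) (w v ℓ e μ : ℕ → R)
    (h0 : ℓ 0 = e 0 * v 0) (hsucc : ∀ k, ℓ (k + 1) = e (k + 1) * v (k + 1) - μ (k + 1) * v k)
    (hw : ∀ k < n, w (k + 1) * μ (k + 1) = w k * (e k - e n)) :
    ∑ k ∈ range (n + 1), w k * ℓ k = e n * ∑ k ∈ range (n + 1), w k * v k := by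
  have hlow : ∑ k ∈ range n, w (k + 1) * μ (k + 1) * v k
      = ∑ k ∈ range (n + 1), w k * (e k - e n) * v k := by
    rw [sum_range_succ, sub_self, mul_zero, zero_mul, add_zero]
    exact sum_congr rfl fun k hk => by rw [hw k (mem_range.mp hk)]
  have hsplit : ∑ k ∈ range (n + 1), w k * ℓ k
      = ∑ k ∈ range (n + 1), w k * e k * v k - ∑ k ∈ range n, w (k + 1) * μ (k + 1) * v k := by
    rw [sum_range_succ', sum_range_succ' (fun k => w k * e k * v k), h0, add_sub_right_comm,
      ← sum_sub_distrib]
    simp only [hsucc]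
    rw [mul_assoc]
    exact congrArg (· + _) (sum_congr rfl fun k _ => by ring)
  rw [hsplit, hlow, ← sum_sub_distrib, mul_sum]
  exact sum_congr rfl fun k _ => by ring

lemma qPoch_zero (z q : ℂ) : qPoch z q 0 = 1 := prod_range_zero _

lemma qPoch_succ (z q : ℂ) (k : ℕ) : qPoch z q (k + 1) = qPoch z q k * (1 - z * q ^ k) :=
  prod_range_succ _ _

lemma qPoch_succ' (z q : ℂ) (k : ℕ) : qPoch z q (k + 1) = (1 - z) * qPoch (z * q) q k := by
  simp only [qPoch, prod_range_succ', pow_zero, mul_one, pow_succ, mul_assoc, mul_comm]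

noncomputable def zhedanovK0 (q a c : ℂ) : (ℂ → ℂ) →ₗ[ℂ] (ℂ → ℂ) where
  toFun f x := q * (c * x + a * (x - c * (1 + q - x))) / x ^ 2 * f x
    + (x - q * a) * (x - q * c) / x ^ 2 * f (x / q)
    - q * (x - 1) * a * c / x ^ 2 * f (q * x)
  map_add' f g := by
    funext x
    simp only [Pi.add_apply]
    ring
  map_smul' r f := by
    funext x
    simp only [Pi.smul_apply, smul_eq_mul, RingHom.id_apply]
    ring

section

variable {q : ℂ} (a c : ℂ) {x : ℂ}

lemma zhedanovK0_one (hx : x ≠ 0) : zhedanovK0 q a c (fun _ => 1) x = 1 := by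
  simp only [zhedanovK0, LinearMap.coe_mk, AddHom.coe_mk]
  field_simp
  ring

lemma zhedanovK0_qPoch_succ (hq : q ≠ 0) (hx : x ≠ 0) (k : ℕ) :
    zhedanovK0 q a c (fun y => qPoch y q (k + 1)) x
      = (q ^ (k + 1))⁻¹ * qPoch x q (k + 1)
        - (q ^ (k + 1))⁻¹ * ((1 - q ^ (k + 1)) * (1 - a * q ^ (k + 1)) * (1 - c * q ^ (k + 1)))
          * qPoch x q k := by
  have hdown : qPoch (x / q) q (k + 1) = (1 - x / q) * qPoch x q k := by
    rw [qPoch_succ', div_mul_cancel₀ x hq]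
  have hup : (1 - x) * qPoch (q * x) q (k + 1)
      = qPoch x q k * (1 - x * q ^ k) * (1 - x * q ^ (k + 1)) := by
    rw [mul_comm q x, ← qPoch_succ', qPoch_succ, qPoch_succ]
  simp only [zhedanovK0, LinearMap.coe_mk, AddHom.coe_mk]
  rw [hdown, show q * (x - 1) * a * c / x ^ 2 * qPoch (q * x) q (k + 1)
      = -(q * a * c / x ^ 2) * ((1 - x) * qPoch (q * x) q (k + 1)) by ring, hup, qPoch_succ]
  field_simp
  ring

end

noncomputable def bigQLaguerreCoeff (n : ℕ) (q a c : ℂ) (k : ℕ) : ℂ :=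
  qPoch (q ^ n)⁻¹ q k / (qPoch q q k * qPoch (a * q) q k * qPoch (c * q) q k) * q ^ k

lemma bigQLaguerreCoeff_succ_mul {n : ℕ} {q : ℂ} (a c : ℂ) (hq : q ≠ 0) (k : ℕ)
    (hf : (1 - q ^ (k + 1)) * (1 - a * q ^ (k + 1)) * (1 - c * q ^ (k + 1)) ≠ 0) :
    bigQLaguerreCoeff n q a c (k + 1)
        * ((q ^ (k + 1))⁻¹ * ((1 - q ^ (k + 1)) * (1 - a * q ^ (k + 1)) * (1 - c * q ^ (k + 1))))
      = bigQLaguerreCoeff n q a c k * ((q ^ k)⁻¹ - (q ^ n)⁻¹) := by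
  set f := (1 - q ^ (k + 1)) * (1 - a * q ^ (k + 1)) * (1 - c * q ^ (k + 1))
  have hden : qPoch q q (k + 1) * qPoch (a * q) q (k + 1) * qPoch (c * q) q (k + 1)
      = qPoch q q k * qPoch (a * q) q k * qPoch (c * q) q k * f := by
    simp only [f, qPoch_succ, pow_succ]
    ring
  simp only [bigQLaguerreCoeff]
  rw [hden, qPoch_succ (q ^ n)⁻¹, mul_div_mul_comm]
  generalize qPoch (q ^ n)⁻¹ q k / (qPoch q q k * qPoch (a * q) q k * qPoch (c * q) q k) = r
  field_simp

/-- The big q-Laguerre polynomials are eigenfunctions, with eigenvalue `q⁻ⁿ`,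
of the operator `K₀` of the basic representation of the confluent Zhedanov
algebra `Z_IV` (in the rescaled variable). -/
theorem bigQLaguerre_eigenfunction (n : ℕ) (q a c : ℂ) (hq : q ≠ 0)
    (hqj : ∀ j : ℕ, 1 ≤ j → j ≤ n → q ^ j ≠ 1)
    (haj : ∀ j : ℕ, 1 ≤ j → j ≤ n → a * q ^ j ≠ 1)
    (hcj : ∀ j : ℕ, 1 ≤ j → j ≤ n → c * q ^ j ≠ 1)
    (P : ℂ → ℂ)
    (hP : ∀ x : ℂ, P x = ∑ k ∈ Finset.range (n + 1),
        qPoch (q ^ n)⁻¹ q k * qPoch x q k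
          / (qPoch q q k * qPoch (a * q) q k * qPoch (c * q) q k) * q ^ k) :
    ∀ x : ℂ, x ≠ 0 →
      q * (c * x + a * (x - c * (1 + q - x))) / x ^ 2 * P x
        + (x - q * a) * (x - q * c) / x ^ 2 * P (x / q)
        - q * (x - 1) * a * c / x ^ 2 * P (q * x)
        = (q ^ n)⁻¹ * P x := by
  intro x hx
  have hPsum : P = ∑ k ∈ range (n + 1), bigQLaguerreCoeff n q a c k • fun y => qPoch y q k := by
    funext y
    simp only [hP, Finset.sum_apply, Pi.smul_apply, smul_eq_mul, bigQLaguerreCoeff]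
    exact sum_congr rfl fun k _ => by ring
  have hfactor : ∀ j, 1 ≤ j → j ≤ n → (1 - q ^ j) * (1 - a * q ^ j) * (1 - c * q ^ j) ≠ 0 :=
    fun j h1 hn => mul_ne_zero (mul_ne_zero (sub_ne_zero.mpr (hqj j h1 hn).symm)
      (sub_ne_zero.mpr (haj j h1 hn).symm)) (sub_ne_zero.mpr (hcj j h1 hn).symm)
  change zhedanovK0 q a c P x = (q ^ n)⁻¹ * P x
  rw [hPsum]
  simp only [map_sum, map_smul, Finset.sum_apply, Pi.smul_apply, smul_eq_mul]
  refine sum_mul_eq_of_lowering n _ (fun k => qPoch x q k)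
    (fun k => zhedanovK0 q a c (fun y => qPoch y q k) x) (fun k => (q ^ k)⁻¹)
    (fun k => (q ^ k)⁻¹ * ((1 - q ^ k) * (1 - a * q ^ k) * (1 - c * q ^ k))) ?_
    (zhedanovK0_qPoch_succ a c hq hx) fun k hk => ?_
  · simp only [qPoch_zero, pow_zero, inv_one, one_mul, zhedanovK0_one a c hx]
  · exact bigQLaguerreCoeff_succ_mul a c hq k (hfactor (k + 1) (by omega) hk)
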